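/- arXiv:2308.07289 — 4 statements merged into one kernel-verified Lean document; each statement's English description precedes it below -/
import Mathlib

section
/- Let Z be a vector in R^{1+3} satisfying h(Z,Z) < 0, where h_{αβ} = n(c^{-2} m_{αβ} + (c^{-2}-1) u_α u_β) with 0 < c ≤ 1, n > 0, and m(u,u) = -1. Then m(Z,Z) < 0; i.e., every h-timelike vector is m-timelike (the acoustic null cones lie inside the Minkowski null cones). -/
set_option maxHeartbeats 1000000


/-- The Minkowski metric `diag(-1,1,1,1)` diagonal entries. -/
noncomputable def mink4 : Fin 4 → ℝ := fun α => if α = 0 then -1 else 1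

/-- every `h`-timelike vector is `m`-timelike, i.e. the acoustic null
cones lie inside the Minkowski null cones. -/
theorem acoustically_timelike_implies_minkowski_timelike
    (u Z : Fin 4 → ℝ) (hu0 : 0 < u 0) (c : ℝ) (hc : 0 < c) (hc1 : c ≤ 1)
    (hnorm : ∑ κ : Fin 4, mink4 κ * u κ * u κ = -1) :
    let n : ℝ := c ^ 2 + (1 - c ^ 2) * (u 0) ^ 2
    let uL : Fin 4 → ℝ := fun α => mink4 α * u α
    let h : Fin 4 → Fin 4 → ℝ := fun α β =>
      n * ((c ^ 2)⁻¹ * (if α = β then mink4 α else 0) + ((c ^ 2)⁻¹ - 1) * uL α * uL β)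
    (∑ α : Fin 4, ∑ β : Fin 4, h α β * Z α * Z β) < 0 →
      (∑ α : Fin 4, mink4 α * Z α * Z α) < 0 := by
  intro n uL h hlt
  have hc2 : (0:ℝ) < c ^ 2 := by positivity
  have h1c : c ^ 2 ≤ 1 := by nlinarith
  have hn : (0:ℝ) < n := by
    show (0:ℝ) < c ^ 2 + (1 - c ^ 2) * (u 0) ^ 2
    nlinarith [mul_nonneg (by linarith : (0:ℝ) ≤ 1 - c ^ 2) (sq_nonneg (u 0))]
  have ha : (0:ℝ) < (c ^ 2)⁻¹ := by positivity
  have hci : (1:ℝ) ≤ (c ^ 2)⁻¹ := by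
    rw [le_inv_comm₀ one_pos hc2]; linarith
  set S : ℝ := ∑ α : Fin 4, mink4 α * Z α * Z α with hS
  set T : ℝ := ∑ α : Fin 4, uL α * Z α with hT
  have key : (∑ α : Fin 4, ∑ β : Fin 4, h α β * Z α * Z β)
      = n * ((c ^ 2)⁻¹ * S + ((c ^ 2)⁻¹ - 1) * T ^ 2) := by
    simp only [hS, hT, h, uL, mink4, Fin.sum_univ_four, Fin.reduceEq]
    norm_num
    ring
  rw [key] at hlt
  have hb : (0:ℝ) ≤ ((c ^ 2)⁻¹ - 1) * T ^ 2 := mul_nonneg (by linarith) (sq_nonneg T)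
  have hX : (c ^ 2)⁻¹ * S + ((c ^ 2)⁻¹ - 1) * T ^ 2 < 0 := by
    by_contra hX
    push_neg at hX
    linarith [mul_nonneg hn.le hX]
  nlinarith
end

section
/- Consider the ODE initial value problem (d/dU) t_CH(U) = (1/2) μ(t_CH(U), U), t_CH(0) = T_Shock, where μ(t,U) = (n(U)/c(U))(1 + t G(U)) with c/n and G C^2, G(0) = -δ* = -1/T_Shock, G'(0) = 0, G''(0) > 0, and c/n bounded in [c₀, 1] with c₀ > 0. Then on a sufficiently small interval [0, U_0] a unique C^3 solution exists, and it satisfies t_CH(U) = T_Shock + O_pos(1) U^3 and μ(t_CH(U), U) = O_pos(1) U^2; in particular t_CH'(0) = t_CH''(0) = 0 and t_CH'''(0) > 0. -/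
/-!
The equation `t' = μ(t, U) / 2` is linear in `t`: with `b = (2 r)⁻¹` it reads `t' = G b t + b`,
so an integrating factor gives an explicit solution, which is `C³` because `G` and `r` are `C²`,
and which is unique. Along it, the numerator `N = 1 + t G` of `μ` vanishes at `U = 0` by the
crease condition `1 + T G(0) = 0`, so does `N'` because `G'(0) = 0`, and `N''(0) = T G''(0) > 0`.
Hence `N`, and with it `μ = N / r` (as `c₀ ≤ r ≤ 1`), is comparable to `U²` near `0`, and
integrating `t' = μ / 2` makes `t - T` comparable to `U³`. Differentiating `t' = b N` at `0` gives
`t'(0) = t''(0) = 0` and `t'''(0) = b(0) T G''(0) > 0`.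
-/
open Set Real

section LinearODE

variable {a b : ℝ → ℝ} {t₀ : ℝ}

noncomputable def linearODESol (a b : ℝ → ℝ) (t₀ x : ℝ) : ℝ :=
  exp (∫ s in 0..x, a s) * (t₀ + ∫ s in 0..x, exp (-∫ σ in 0..s, a σ) * b s)

theorem linearODESol_zero : linearODESol a b t₀ 0 = t₀ := by
  simp [linearODESol]

theorem hasDerivAt_linearODESol (ha : Continuous a) (hb : Continuous b) (x : ℝ) :
    HasDerivAt (linearODESol a b t₀) (a x * linearODESol a b t₀ x + b x) x := by
  have hA : ∀ y, HasDerivAt (fun y => ∫ s in 0..y, a s) (a y) y := fun y =>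
    (ha.integral_hasStrictDerivAt 0 y).hasDerivAt
  have hA_cont : Continuous fun y => ∫ s in 0..y, a s :=
    continuous_iff_continuousAt.2 fun y => (hA y).continuousAt
  have hB : HasDerivAt (fun y => ∫ s in 0..y, exp (-∫ σ in 0..s, a σ) * b s)
      (exp (-∫ σ in 0..x, a σ) * b x) x :=
    (((hA_cont.neg.rexp).mul hb).integral_hasStrictDerivAt 0 x).hasDerivAt
  refine ((hA x).exp.fun_mul (hB.const_add t₀)).congr_deriv ?_
  simp only [linearODESol, exp_neg]
  field_simp

theorem contDiff_linearODESol {n : ℕ} (ha : ContDiff ℝ n a) (hb : ContDiff ℝ n b) :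
    ContDiff ℝ (n + 1) (linearODESol a b t₀) := by
  have hderiv := hasDerivAt_linearODESol (t₀ := t₀) ha.continuous hb.continuous
  refine contDiff_succ_iff_deriv.2 ⟨fun x => (hderiv x).differentiableAt, by simp, ?_⟩
  rw [funext fun x => (hderiv x).deriv]
  refine (ha.mul ?_).add hb
  cases n with
  | zero => exact contDiff_zero.2 (continuous_iff_continuousAt.2 fun x => (hderiv x).continuousAt)
  | succ n =>
    exact_mod_cast contDiff_linearODESol (n := n) (by exact_mod_cast ha.of_succ)
      (by exact_mod_cast hb.of_succ)

theorem eqOn_linearODESol {D : Set ℝ} (hD : Convex ℝ D) (h0 : 0 ∈ D) (ha : Continuous a)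
    (hb : Continuous b) {s : ℝ → ℝ} (hs0 : s 0 = t₀)
    (hs : ∀ x ∈ D, HasDerivWithinAt s (a x * s x + b x) D x) :
    EqOn s (linearODESol a b t₀) D := by
  intro x hx
  set A : ℝ → ℝ := fun y => ∫ σ in 0..y, a σ
  have hw : ∀ y ∈ D,
      HasDerivWithinAt (fun y => exp (-A y) * (s y - linearODESol a b t₀ y)) 0 D y := by
    intro y hy
    have hA : HasDerivAt A (a y) y := (ha.integral_hasStrictDerivAt 0 y).hasDerivAt
    refine (hA.neg.exp.hasDerivWithinAt.fun_mul
      ((hs y hy).fun_sub (hasDerivAt_linearODESol ha hb y).hasDerivWithinAt)).congr_deriv ?_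
    ring
  have := hD.norm_image_sub_le_of_norm_hasDerivWithin_le (C := 0) hw (fun _ _ => by simp) h0 hx
  simp only [hs0, linearODESol_zero, sub_self, mul_zero, sub_zero, zero_mul, norm_le_zero_iff,
    mul_eq_zero, exp_ne_zero, false_or] at this
  exact sub_eq_zero.1 this

end LinearODE

theorem pow_succ_bounds_of_deriv_pow_bounds {g g' : ℝ → ℝ} {L m M : ℝ} (n : ℕ)
    (hg : ∀ x ∈ Icc 0 L, HasDerivAt g (g' x) x)
    (hg' : ∀ x ∈ Icc 0 L, m * x ^ n ≤ g' x ∧ g' x ≤ M * x ^ n) {x : ℝ} (hx : x ∈ Icc 0 L) :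
    g 0 + m / (n + 1) * x ^ (n + 1) ≤ g x ∧ g x ≤ g 0 + M / (n + 1) * x ^ (n + 1) := by
  have hpow : ∀ c y, HasDerivAt (fun y => g 0 + c / (n + 1) * y ^ (n + 1)) (c * y ^ n) y := by
    intro c y
    refine (((hasDerivAt_pow (n + 1) y).const_mul _).const_add _).congr_deriv ?_
    push_cast
    field_simp
  have hg_cont : ContinuousOn g (Icc 0 L) := fun y hy => (hg y hy).continuousAt.continuousWithinAt
  have hg_right : ∀ y ∈ Ico 0 L, HasDerivWithinAt g (g' y) (Ici y) y :=
    fun y hy => (hg y (Ico_subset_Icc_self hy)).hasDerivWithinAt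
  constructor
  · refine image_le_of_deriv_right_le_deriv_boundary (by fun_prop)
      (fun y _ => (hpow m y).hasDerivWithinAt) (by simp) hg_cont hg_right
      (fun y hy => (hg' y (Ico_subset_Icc_self hy)).1) hx
  · exact image_le_of_deriv_right_le_deriv_boundary hg_cont hg_right (by simp) (by fun_prop)
      (fun y _ => (hpow M y).hasDerivWithinAt) (fun y hy => (hg' y (Ico_subset_Icc_self hy)).2) hx

theorem sq_bounds_of_deriv_deriv_bounds {f : ℝ → ℝ} {L m M : ℝ} (hf : ContDiff ℝ 2 f)
    (hf0 : f 0 = 0) (hf1 : deriv f 0 = 0)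
    (hf2 : ∀ x ∈ Icc 0 L, m ≤ deriv (deriv f) x ∧ deriv (deriv f) x ≤ M)
    {x : ℝ} (hx : x ∈ Icc 0 L) : m / 2 * x ^ 2 ≤ f x ∧ f x ≤ M / 2 * x ^ 2 := by
  have hdf : Differentiable ℝ (deriv f) := hf.differentiable_deriv_two
  have h1 : ∀ y ∈ Icc 0 L, m * y ≤ deriv f y ∧ deriv f y ≤ M * y := by
    intro y hy
    simpa [hf1] using pow_succ_bounds_of_deriv_pow_bounds 0 (fun z _ => (hdf z).hasDerivAt)
      (by simpa using hf2) hy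
  simpa [hf0, one_add_one_eq_two] using pow_succ_bounds_of_deriv_pow_bounds 1
    (fun z _ => (hf.differentiable (by norm_num) z).hasDerivAt) (by simpa using h1) hx

theorem exists_Icc_bounds_of_continuousAt {g : ℝ → ℝ} {m M : ℝ} (hg : ContinuousAt g 0)
    (hm : m < g 0) (hM : g 0 < M) : ∃ L > 0, ∀ x ∈ Icc 0 L, m ≤ g x ∧ g x ≤ M := by
  obtain ⟨L, hL, hsub⟩ := mem_nhdsGE_iff_exists_Icc_subset.1
    (nhdsWithin_le_nhds (hg (Icc_mem_nhds hm hM)))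
  exact ⟨L, hL, fun x hx => hsub hx⟩

theorem deriv_deriv_mul {u v : ℝ → ℝ} (hu : ContDiff ℝ 2 u) (hv : ContDiff ℝ 2 v) (x : ℝ) :
    deriv (deriv (u * v)) x
      = deriv (deriv u) x * v x + 2 * (deriv u x * deriv v x) + u x * deriv (deriv v) x := by
  have hu1 := hu.differentiable two_ne_zero
  have hv1 := hv.differentiable two_ne_zero
  have hu2 := hu.differentiable_deriv_two
  have hv2 := hv.differentiable_deriv_two
  have h1 : deriv (u * v) = deriv u * v + u * deriv v := funext fun y => deriv_mul (hu1 y) (hv1 y)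
  rw [h1, deriv_add ((hu2 x).mul (hv1 x)) ((hu1 x).mul (hv2 x)),
    deriv_mul (hu2 x) (hv1 x), deriv_mul (hu1 x) (hv2 x)]
  ring

namespace CauchyHorizon

variable {T : ℝ} {G r : ℝ → ℝ}

noncomputable def rate (r : ℝ → ℝ) (U : ℝ) : ℝ := (2 * r U)⁻¹

noncomputable def curve (T : ℝ) (G r : ℝ → ℝ) : ℝ → ℝ := linearODESol (G * rate r) (rate r) T

noncomputable def muNumerator (T : ℝ) (G r : ℝ → ℝ) (U : ℝ) : ℝ := 1 + curve T G r U * G U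

theorem half_mu_eq (t U : ℝ) : 1 / 2 * ((1 + t * G U) / r U) = (G * rate r) U * t + rate r U := by
  simp only [Pi.mul_apply, rate]
  ring

theorem continuous_rate (hr : Continuous r) (hr0 : ∀ U, r U ≠ 0) : Continuous (rate r) :=
  (continuous_const.mul hr).inv₀ fun U => mul_ne_zero two_ne_zero (hr0 U)

theorem contDiff_rate (hr : ContDiff ℝ 2 r) (hr0 : ∀ U, r U ≠ 0) : ContDiff ℝ 2 (rate r) :=
  (contDiff_const.mul hr).inv fun U => mul_ne_zero two_ne_zero (hr0 U)

theorem curve_zero : curve T G r 0 = T := linearODESol_zero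

theorem hasDerivAt_curve (hG : Continuous G) (hr : Continuous r) (hr0 : ∀ U, r U ≠ 0) (U : ℝ) :
    HasDerivAt (curve T G r) (1 / 2 * ((1 + curve T G r U * G U) / r U)) U := by
  rw [half_mu_eq]
  exact hasDerivAt_linearODESol (hG.mul (continuous_rate hr hr0)) (continuous_rate hr hr0) U

theorem deriv_curve (hG : Continuous G) (hr : Continuous r) (hr0 : ∀ U, r U ≠ 0) :
    deriv (curve T G r) = rate r * muNumerator T G r := by
  ext U
  rw [(hasDerivAt_curve hG hr hr0 U).deriv, Pi.mul_apply, muNumerator, rate]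
  ring

theorem eqOn_curve {D : Set ℝ} (hD : Convex ℝ D) (h0 : 0 ∈ D) (hG : Continuous G)
    (hr : Continuous r) (hr0 : ∀ U, r U ≠ 0) {s : ℝ → ℝ} (hs0 : s 0 = T)
    (hs : ∀ U ∈ D, HasDerivWithinAt s (1 / 2 * ((1 + s U * G U) / r U)) D U) :
    EqOn s (curve T G r) D :=
  eqOn_linearODESol hD h0 (hG.mul (continuous_rate hr hr0)) (continuous_rate hr hr0) hs0
    fun U hU => by simpa only [half_mu_eq] using hs U hU

theorem contDiff_curve (hG : ContDiff ℝ 2 G) (hr : ContDiff ℝ 2 r) (hr0 : ∀ U, r U ≠ 0) :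
    ContDiff ℝ 3 (curve T G r) :=
  contDiff_linearODESol (n := 2) (hG.mul (contDiff_rate hr hr0)) (contDiff_rate hr hr0)

theorem contDiff_muNumerator (hG : ContDiff ℝ 2 G) (hr : ContDiff ℝ 2 r) (hr0 : ∀ U, r U ≠ 0) :
    ContDiff ℝ 2 (muNumerator T G r) :=
  contDiff_const.add (((contDiff_curve hG hr hr0).of_le (by norm_num)).mul hG)

theorem deriv_muNumerator : deriv (muNumerator T G r) = deriv (curve T G r * G) := by
  ext U
  exact deriv_const_add 1

theorem muNumerator_zero (hcrease : 1 + T * G 0 = 0) : muNumerator T G r 0 = 0 := by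
  rw [muNumerator, curve_zero, hcrease]

theorem deriv_curve_zero (hG : ContDiff ℝ 2 G) (hr : ContDiff ℝ 2 r) (hr0 : ∀ U, r U ≠ 0)
    (hcrease : 1 + T * G 0 = 0) : deriv (curve T G r) 0 = 0 := by
  rw [deriv_curve hG.continuous hr.continuous hr0, Pi.mul_apply, muNumerator_zero hcrease, mul_zero]

theorem deriv_muNumerator_zero (hG : ContDiff ℝ 2 G) (hr : ContDiff ℝ 2 r) (hr0 : ∀ U, r U ≠ 0)
    (hcrease : 1 + T * G 0 = 0) (hG1 : deriv G 0 = 0) : deriv (muNumerator T G r) 0 = 0 := by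
  have hcurve := (contDiff_curve (T := T) hG hr hr0).differentiable (by norm_num) 0
  rw [deriv_muNumerator, deriv_mul hcurve (hG.differentiable two_ne_zero 0),
    deriv_curve_zero hG hr hr0 hcrease, hG1]
  ring

theorem deriv_deriv_curve_zero (hG : ContDiff ℝ 2 G) (hr : ContDiff ℝ 2 r)
    (hr0 : ∀ U, r U ≠ 0) (hcrease : 1 + T * G 0 = 0) (hG1 : deriv G 0 = 0) :
    deriv (deriv (curve T G r)) 0 = 0 := by
  rw [deriv_curve hG.continuous hr.continuous hr0,
    deriv_mul ((contDiff_rate hr hr0).differentiable two_ne_zero 0)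
      ((contDiff_muNumerator hG hr hr0).differentiable two_ne_zero 0),
    muNumerator_zero hcrease, deriv_muNumerator_zero hG hr hr0 hcrease hG1]
  ring

theorem deriv_deriv_muNumerator_zero (hG : ContDiff ℝ 2 G) (hr : ContDiff ℝ 2 r)
    (hr0 : ∀ U, r U ≠ 0) (hcrease : 1 + T * G 0 = 0) (hG1 : deriv G 0 = 0) :
    deriv (deriv (muNumerator T G r)) 0 = T * deriv (deriv G) 0 := by
  rw [deriv_muNumerator, deriv_deriv_mul ((contDiff_curve hG hr hr0).of_le (by norm_num)) hG,
    deriv_deriv_curve_zero hG hr hr0 hcrease hG1, deriv_curve_zero hG hr hr0 hcrease, curve_zero]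
  ring

theorem deriv_deriv_deriv_curve_zero (hG : ContDiff ℝ 2 G) (hr : ContDiff ℝ 2 r)
    (hr0 : ∀ U, r U ≠ 0) (hcrease : 1 + T * G 0 = 0) (hG1 : deriv G 0 = 0) :
    deriv (deriv (deriv (curve T G r))) 0 = rate r 0 * (T * deriv (deriv G) 0) := by
  rw [deriv_curve hG.continuous hr.continuous hr0,
    deriv_deriv_mul (contDiff_rate hr hr0) (contDiff_muNumerator hG hr hr0),
    muNumerator_zero hcrease, deriv_muNumerator_zero hG hr hr0 hcrease hG1,
    deriv_deriv_muNumerator_zero hG hr hr0 hcrease hG1]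
  ring

theorem exists_sq_bounds_muNumerator (hG : ContDiff ℝ 2 G) (hr : ContDiff ℝ 2 r)
    (hr0 : ∀ U, r U ≠ 0) (hcrease : 1 + T * G 0 = 0) (hG1 : deriv G 0 = 0)
    (hK : 0 < T * deriv (deriv G) 0) :
    ∃ L > 0, ∀ U ∈ Icc 0 L, T * deriv (deriv G) 0 / 4 * U ^ 2 ≤ muNumerator T G r U ∧
      muNumerator T G r U ≤ T * deriv (deriv G) 0 * U ^ 2 := by
  set K := T * deriv (deriv G) 0
  have hN := contDiff_muNumerator (T := T) hG hr hr0
  have hN2 : deriv (deriv (muNumerator T G r)) 0 = K :=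
    deriv_deriv_muNumerator_zero hG hr hr0 hcrease hG1
  obtain ⟨L, hL, hbounds⟩ := exists_Icc_bounds_of_continuousAt (m := K / 2) (M := 2 * K)
    ((hN.deriv' (n := 1)).continuous_deriv le_rfl).continuousAt (by linarith) (by linarith)
  refine ⟨L, hL, fun U hU => ?_⟩
  have := sq_bounds_of_deriv_deriv_bounds hN (muNumerator_zero hcrease)
    (deriv_muNumerator_zero hG hr hr0 hcrease hG1) hbounds hU
  constructor <;> linarith

theorem exists_cubic_bounds {c₀ : ℝ} (hT : 0 < T) (hc₀ : 0 < c₀) (hG : ContDiff ℝ 2 G)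
    (hr : ContDiff ℝ 2 r) (hrbound : ∀ U, c₀ ≤ r U ∧ r U ≤ 1) (hcrease : 1 + T * G 0 = 0)
    (hG1 : deriv G 0 = 0) (hG2 : 0 < deriv (deriv G) 0) :
    ∃ U₀ > 0, ∃ C₁ C₂ : ℝ, 0 < C₁ ∧ C₁ ≤ C₂ ∧ ∀ U ∈ Icc 0 U₀,
      T + C₁ * U ^ 3 ≤ curve T G r U ∧ curve T G r U ≤ T + C₂ * U ^ 3 ∧
      C₁ * U ^ 2 ≤ (1 + curve T G r U * G U) / r U ∧
      (1 + curve T G r U * G U) / r U ≤ C₂ * U ^ 2 := by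
  set K := T * deriv (deriv G) 0
  have hK : 0 < K := mul_pos hT hG2
  have hr_pos : ∀ U, 0 < r U := fun U => hc₀.trans_le (hrbound U).1
  have hr0 : ∀ U, r U ≠ 0 := fun U => (hr_pos U).ne'
  have hc₀_le : c₀ ≤ 1 := (hrbound 0).1.trans (hrbound 0).2
  obtain ⟨L, hL, hN⟩ := exists_sq_bounds_muNumerator hG hr hr0 hcrease hG1 hK
  have hmu : ∀ U ∈ Icc 0 L, K / 4 * U ^ 2 ≤ (1 + curve T G r U * G U) / r U ∧
      (1 + curve T G r U * G U) / r U ≤ K / c₀ * U ^ 2 := by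
    intro U hU
    obtain ⟨hlow, hupp⟩ := hN U hU
    unfold muNumerator at hlow hupp
    have hN_nonneg : 0 ≤ 1 + curve T G r U * G U := le_trans (by positivity) hlow
    constructor
    · rw [le_div_iff₀ (hr_pos U)]
      nlinarith [(hrbound U).2]
    · rw [div_le_iff₀ (hr_pos U), div_mul_eq_mul_div, mul_assoc, div_mul_eq_mul_div,
        le_div_iff₀ hc₀]
      nlinarith [(hrbound U).1, mul_nonneg hK.le (sq_nonneg U)]
  refine ⟨L, hL, K / 24, K / c₀, ?_, ?_, fun U hU => ?_⟩
  · positivity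
  · rw [div_le_div_iff₀ (by norm_num) hc₀]
    nlinarith
  have hcurve := pow_succ_bounds_of_deriv_pow_bounds 2 (m := K / 8) (M := K / c₀ / 2)
    (fun x _ => hasDerivAt_curve (T := T) hG.continuous hr.continuous hr0 x)
    (fun x hx => by constructor <;> linarith [hmu x hx]) hU
  rw [curve_zero] at hcurve
  have hU3 : 0 ≤ U ^ 3 := pow_nonneg hU.1 3
  have hKc : K / c₀ / 2 / (2 + 1) ≤ K / c₀ := by
    have : 0 ≤ K / c₀ := by positivity
    linarith
  refine ⟨?_, ?_, ?_, ?_⟩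
  · linarith [hcurve.1]
  · nlinarith [hcurve.2]
  · nlinarith [(hmu U hU).1, sq_nonneg U]
  · exact (hmu U hU).2

end CauchyHorizon

open CauchyHorizon in
/-- the Cauchy horizon ODE `t_CH'(U) = (1/2) μ(t_CH(U), U)`,
`t_CH(0) = T_Shock`, with `μ(t,U) = (n/c)(U)(1 + t G(U))`, `G(0) = -δ* = -1/T_Shock`,
`G'(0) = 0`, `G''(0) > 0`, and `c/n ∈ [c₀,1]`, has a unique `C³` solution on a small
interval `[0,U₀]`, satisfying `t_CH(U) = T_Shock + O_pos(1) U³` and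
`μ(t_CH(U),U) = O_pos(1) U²`; in particular `t_CH'(0) = t_CH''(0) = 0 < t_CH'''(0)`.
Here `r = c/n`, so `μ(t,U) = (1 + t G(U)) / r(U)`. -/
theorem cauchy_horizon_ode_existence_uniqueness_asymptotics
    (T δ c₀ : ℝ) (hT : 0 < T) (hδ : δ = 1 / T) (hc₀ : 0 < c₀)
    (G r : ℝ → ℝ) (hG : ContDiff ℝ 2 G) (hr : ContDiff ℝ 2 r)
    (hG0 : G 0 = -δ) (hG1 : deriv G 0 = 0) (hG2 : 0 < iteratedDeriv 2 G 0)
    (hrbound : ∀ U : ℝ, c₀ ≤ r U ∧ r U ≤ 1) :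
    let μ : ℝ → ℝ → ℝ := fun t U => (1 + t * G U) / r U
    ∃ U₀ : ℝ, 0 < U₀ ∧ ∃ tCH : ℝ → ℝ,
      ContDiffOn ℝ 3 tCH (Set.Icc 0 U₀)
      ∧ tCH 0 = T
      ∧ (∀ U ∈ Set.Icc (0 : ℝ) U₀,
          HasDerivWithinAt tCH ((1 / 2) * μ (tCH U) U) (Set.Icc 0 U₀) U)
      ∧ (∀ s : ℝ → ℝ, s 0 = T →
          (∀ U ∈ Set.Icc (0 : ℝ) U₀,
            HasDerivWithinAt s ((1 / 2) * μ (s U) U) (Set.Icc 0 U₀) U) →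
          ∀ U ∈ Set.Icc (0 : ℝ) U₀, s U = tCH U)
      ∧ (∃ C₁ C₂ : ℝ, 0 < C₁ ∧ C₁ ≤ C₂ ∧ ∀ U ∈ Set.Icc (0 : ℝ) U₀,
          T + C₁ * U ^ 3 ≤ tCH U ∧ tCH U ≤ T + C₂ * U ^ 3
            ∧ C₁ * U ^ 2 ≤ μ (tCH U) U ∧ μ (tCH U) U ≤ C₂ * U ^ 2)
      ∧ iteratedDerivWithin 1 tCH (Set.Icc 0 U₀) 0 = 0
      ∧ iteratedDerivWithin 2 tCH (Set.Icc 0 U₀) 0 = 0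
      ∧ 0 < iteratedDerivWithin 3 tCH (Set.Icc 0 U₀) 0 := by
  intro μ
  have hr_pos : ∀ U, 0 < r U := fun U => hc₀.trans_le (hrbound U).1
  have hr0 : ∀ U, r U ≠ 0 := fun U => (hr_pos U).ne'
  have hcrease : 1 + T * G 0 = 0 := by
    rw [hG0, hδ]
    field_simp
    ring
  have hG2' : 0 < deriv (deriv G) 0 := by rwa [iteratedDeriv_succ, iteratedDeriv_one] at hG2
  obtain ⟨U₀, hU₀, hbounds⟩ := exists_cubic_bounds hT hc₀ hG hr hrbound hcrease hG1 hG2'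
  have hcurve := contDiff_curve (T := T) hG hr hr0
  have hwithin : ∀ n : ℕ, n ≤ 3 →
      iteratedDerivWithin n (curve T G r) (Icc 0 U₀) 0 = iteratedDeriv n (curve T G r) 0 :=
    fun n hn => iteratedDerivWithin_eq_iteratedDeriv (uniqueDiffOn_Icc hU₀)
      (hcurve.contDiffAt.of_le (by exact_mod_cast hn)) (left_mem_Icc.2 hU₀.le)
  refine ⟨U₀, hU₀, curve T G r, hcurve.contDiffOn, curve_zero,
    fun U _ => (hasDerivAt_curve hG.continuous hr.continuous hr0 U).hasDerivWithinAt,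
    fun s hs0 hs => eqOn_curve (convex_Icc 0 U₀) (left_mem_Icc.2 hU₀.le) hG.continuous
      hr.continuous hr0 hs0 hs, hbounds, ?_, ?_, ?_⟩
  · rw [hwithin 1 (by norm_num), iteratedDeriv_one, deriv_curve_zero hG hr hr0 hcrease]
  · rw [hwithin 2 (by norm_num), iteratedDeriv_succ, iteratedDeriv_one,
      deriv_deriv_curve_zero hG hr hr0 hcrease hG1]
  · rw [hwithin 3 (by norm_num), iteratedDeriv_succ, iteratedDeriv_succ, iteratedDeriv_one,
      deriv_deriv_deriv_curve_zero hG hr hr0 hcrease hG1]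
    exact mul_pos (inv_pos.2 (mul_pos two_pos (hr_pos 0))) (mul_pos hT hG2')
end

section
/- Under the hypotheses of the previous statement (t_CH solving dt_CH/dU = (1/2)μ(t_CH(U),U) with μ(t,U) = (n/c)(U)(1 + tG(U)) and G(0) = -1/T_Shock, G'(0)=0, G''(0)>0), one has t_Sing(U) < t_CH(U) for all sufficiently small U > 0, where t_Sing(U) = -1/G(U); i.e., the Cauchy horizon lies strictly above the fictitious portion of the zero level set of μ for U > 0. -/
/-!
Put `f = 1 + t_CH · G`, so that `t_CH < -1/G` is `f > 0` wherever `G < 0`. The Cauchy horizon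
equation turns into the linear equation `f' = (G / 2r) f + t_CH G'`, and `f(0) = 1 - T/T = 0`.
Near `U = 0⁺` we have `t_CH > 0`, `G < 0`, and `G' > 0` (since `G'(0) = 0 < G''(0)`), so the
forcing term `t_CH G'` is positive; with an integrating factor, `f` is then strictly increasing
from `0`, hence positive.
-/

open Set Filter Topology

theorem pos_of_hasDerivAt_eq_mul_add_pos {f α β : ℝ → ℝ} {a b : ℝ} (hα : Continuous α)
    (hf : ContinuousOn f (Icc a b)) (hf' : ∀ x ∈ Ioo a b, HasDerivAt f (α x * f x + β x) x)
    (hβ : ∀ x ∈ Ioo a b, 0 < β x) (ha : f a = 0) : ∀ x ∈ Ioc a b, 0 < f x := by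
  set E : ℝ → ℝ := fun x => Real.exp (-∫ t in a..x, α t)
  have hE : ∀ x, HasDerivAt E (E x * -α x) x := fun x =>
    (hα.integral_hasStrictDerivAt a x).hasDerivAt.neg.exp
  have hmono : StrictMonoOn (f * E) (Icc a b) := by
    refine strictMonoOn_of_deriv_pos (convex_Icc a b)
      (hf.mul fun x _ => (hE x).continuousAt.continuousWithinAt) fun x hx => ?_
    rw [interior_Icc] at hx
    rw [((hf' x hx).mul (hE x)).deriv]
    calc 0 < β x * E x := mul_pos (hβ x hx) (Real.exp_pos _)
      _ = (α x * f x + β x) * E x + f x * (E x * -α x) := by ring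
  intro x hx
  have hfE := hmono ⟨le_rfl, hx.1.le.trans hx.2⟩ ⟨hx.1.le, hx.2⟩ hx.1
  simp only [Pi.mul_apply, ha, zero_mul] at hfE
  exact pos_of_mul_pos_left hfE (Real.exp_pos _).le

theorem eventually_deriv_pos_nhdsGT {f : ℝ → ℝ} {x₀ : ℝ} (h1 : deriv f x₀ = 0)
    (h2 : 0 < iteratedDeriv 2 f x₀) : ∀ᶠ x in 𝓝[>] x₀, 0 < deriv f x :=
  deriv_pos_right_of_sign_deriv <| nhdsWithin_le_nhds <|
    eventually_nhdsWithin_sign_eq_of_deriv_pos (by simpa [iteratedDeriv_succ] using h2) h1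

theorem HasDerivAt.one_add_mul_of_horizon_ode {t G r : ℝ → ℝ} {G' x : ℝ}
    (ht : HasDerivAt t ((1 / 2) * ((1 + t x * G x) / r x)) x) (hG : HasDerivAt G G' x)
    (hr : r x ≠ 0) :
    HasDerivAt (fun U => 1 + t U * G U) (G x / (2 * r x) * (1 + t x * G x) + t x * G') x := by
  refine ((ht.mul hG).const_add 1).congr_deriv ?_
  field_simp

/-- under the hypotheses of the Cauchy horizon ODE
(`t_CH' = (1/2)μ(t_CH(U),U)`, `μ(t,U) = (1 + tG(U))/r(U)`, `G(0) = -1/T_Shock`,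
`G'(0) = 0`, `G''(0) > 0`), one has `t_CH(U) < t_Sing(U) = -1/G(U)` for all sufficiently
small `U > 0`: the Cauchy horizon lies strictly below the fictitious portion of the zero
level set of `μ` for `U > 0`. -/
theorem cauchy_horizon_below_fictitious_singular_curve
    (T δ c₀ U₀ : ℝ) (hT : 0 < T) (hδ : δ = 1 / T) (hc₀ : 0 < c₀) (hU₀ : 0 < U₀)
    (G r : ℝ → ℝ) (hG : ContDiff ℝ 2 G) (hr : ContDiff ℝ 2 r)
    (hG0 : G 0 = -δ) (hG1 : deriv G 0 = 0) (hG2 : 0 < iteratedDeriv 2 G 0)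
    (hrbound : ∀ U : ℝ, c₀ ≤ r U ∧ r U ≤ 1)
    (tCH : ℝ → ℝ) (htCH0 : tCH 0 = T)
    (hODE : ∀ U ∈ Set.Icc (0 : ℝ) U₀,
      HasDerivWithinAt tCH ((1 / 2) * ((1 + tCH U * G U) / r U)) (Set.Icc 0 U₀) U) :
    ∃ U₁ : ℝ, 0 < U₁ ∧ U₁ ≤ U₀ ∧ ∀ U ∈ Set.Ioc (0 : ℝ) U₁, tCH U < -1 / G U := by
  have hr0 : ∀ U, r U ≠ 0 := fun U => (hc₀.trans_le (hrbound U).1).ne'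
  have htCH : ContinuousOn tCH (Icc 0 U₀) := fun U hU => (hODE U hU).continuousWithinAt
  have hGneg : ∀ᶠ U in 𝓝[>] 0, G U < 0 := by
    refine nhdsWithin_le_nhds (hG.continuous.continuousAt.eventually_lt continuousAt_const ?_)
    rw [hG0, hδ, neg_lt_zero]
    positivity
  have htCHpos : ∀ᶠ U in 𝓝[>] 0, 0 < tCH U := by
    have hcont : ContinuousWithinAt tCH (Ioi 0) 0 :=
      ((continuousWithinAt_Icc_iff_Ici hU₀).1
        (htCH 0 ⟨le_rfl, hU₀.le⟩)).mono Ioi_subset_Ici_self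
    exact hcont.eventually (eventually_gt_nhds (htCH0 ▸ hT))
  obtain ⟨U₁, hU₁, hsub⟩ := mem_nhdsGT_iff_exists_Ioc_subset.1
    (hGneg.and ((eventually_deriv_pos_nhdsGT hG1 hG2).and (htCHpos.and (Ioo_mem_nhdsGT hU₀))))
  have hU₁U₀ : U₁ < U₀ := (hsub ⟨hU₁, le_rfl⟩).2.2.2.2
  have hf0 : 1 + tCH 0 * G 0 = 0 := by
    rw [htCH0, hG0, hδ]
    field_simp
    ring
  have hf : ContinuousOn (fun U => 1 + tCH U * G U) (Icc 0 U₁) := continuousOn_const.add <|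
    (htCH.mono (Icc_subset_Icc_right hU₁U₀.le)).mul hG.continuous.continuousOn
  have hf' : ∀ U ∈ Ioo 0 U₁, HasDerivAt (fun U => 1 + tCH U * G U)
      (G U / (2 * r U) * (1 + tCH U * G U) + tCH U * deriv G U) U := fun U hU =>
    ((hODE U ⟨hU.1.le, (hU.2.trans hU₁U₀).le⟩).hasDerivAt
      (Icc_mem_nhds hU.1 (hU.2.trans hU₁U₀))).one_add_mul_of_horizon_ode
        (hG.differentiable (by norm_num) U).hasDerivAt (hr0 U)
  have hpos := pos_of_hasDerivAt_eq_mul_add_pos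
    (hG.continuous.div (by fun_prop) fun U => mul_ne_zero two_ne_zero (hr0 U)) hf hf'
    (fun U hU => mul_pos (hsub (Ioo_subset_Ioc_self hU)).2.2.1 (hsub (Ioo_subset_Ioc_self hU)).2.1)
    hf0
  refine ⟨U₁, hU₁, hU₁U₀.le, fun U hU => ?_⟩
  rw [lt_div_iff_of_neg (hsub hU).1]
  linarith [hpos U hU]
end

section
/- Let ξ be a past-directed h-timelike one-form as above, and consider the quadratic form Q(ḣ, u̇) := ξ^∥ ḣ^2 + 2c^2 ξ^⊥_κ u̇^κ ḣ + c^2 ξ^∥ u̇_κ u̇^κ restricted to vectors u̇ with u_κ u̇^κ = 0. If (h^{-1})^{κλ} ξ_κ ξ_λ ≤ -C' < 0 and C ≤ ξ^∥ ≤ 1/C for constants C, C' > 0, then there is a constant c₀ > 0 (depending on C, C', c) such that Q(ḣ, u̇) ≥ c₀ (ḣ^2 + u̇_κ u̇^κ) for all such (ḣ, u̇); note u̇_κ u̇^κ ≥ 0 since u̇ is m-orthogonal to the timelike vector u. -/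
lemma ortho_nonneg (u0 u1 u2 u3 x0 x1 x2 x3 : ℝ)
    (hn : u0^2 = 1 + u1^2 + u2^2 + u3^2)
    (ho : u0*x0 = u1*x1 + u2*x2 + u3*x3) :
    0 ≤ -x0^2 + x1^2 + x2^2 + x3^2 := by
  have h0 : 0 < u0^2 := by nlinarith [sq_nonneg u1, sq_nonneg u2, sq_nonneg u3]
  have key : u0^2 * (-x0^2 + x1^2 + x2^2 + x3^2)
      = (x1^2 + x2^2 + x3^2)
        + ((u1*x2 - u2*x1)^2 + (u1*x3 - u3*x1)^2 + (u2*x3 - u3*x2)^2) := by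
    linear_combination (x1^2 + x2^2 + x3^2) * hn - (u0*x0 + u1*x1 + u2*x2 + u3*x3) * ho
  nlinarith [key, h0, sq_nonneg (u1*x2 - u2*x1), sq_nonneg (u1*x3 - u3*x1),
    sq_nonneg (u2*x3 - u3*x2), sq_nonneg x1, sq_nonneg x2, sq_nonneg x3]

lemma ortho_cs (u0 u1 u2 u3 v0 v1 v2 v3 w0 w1 w2 w3 : ℝ)
    (hn : u0^2 = 1 + u1^2 + u2^2 + u3^2)
    (hv : u0*v0 = u1*v1 + u2*v2 + u3*v3)
    (hw : u0*w0 = u1*w1 + u2*w2 + u3*w3) :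
    (-(v0*w0) + v1*w1 + v2*w2 + v3*w3)^2
      ≤ (-v0^2 + v1^2 + v2^2 + v3^2) * (-w0^2 + w1^2 + w2^2 + w3^2) := by
  have hq : ∀ t : ℝ, 0 ≤ (-w0^2 + w1^2 + w2^2 + w3^2) * (t*t)
      + (2*(-(v0*w0) + v1*w1 + v2*w2 + v3*w3)) * t + (-v0^2 + v1^2 + v2^2 + v3^2) := by
    intro t
    have h := ortho_nonneg u0 u1 u2 u3 (v0 + t*w0) (v1 + t*w1) (v2 + t*w2) (v3 + t*w3) hn
      (by linear_combination hv + t*hw)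
    nlinarith [h]
  have hd := discrim_le_zero (a := -w0^2 + w1^2 + w2^2 + w3^2)
      (b := 2*(-(v0*w0) + v1*w1 + v2*w2 + v3*w3)) (c := -v0^2 + v1^2 + v2^2 + v3^2) hq
  rw [discrim] at hd
  nlinarith [hd]

lemma key_quad (c P E B S hd C0 : ℝ) (hc : 0 < c) (hc1 : c ≤ 1) (hP : 0 < P)
    (hE : 0 ≤ E) (hB : 0 ≤ B) (hS : S^2 ≤ E*B) (hD : 0 < P^2 - c^2*E)
    (hC0 : C0 = c^2*(P^2 - c^2*E)/((1+c^2)*P)) :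
    C0*(hd^2 + B) ≤ P*hd^2 + 2*c^2*S*hd + c^2*P*B := by
  have h1 : (0:ℝ) < 1 + c^2 := by positivity
  have hM2 : 0 < c^2*P - C0 := by
    have h2 : c^2*P - C0 = c^2*(c^2*P^2 + c^2*E)/((1+c^2)*P) := by
      rw [hC0]; field_simp; ring
    rw [h2]; positivity
  have hM1 : 0 < P - C0 := by nlinarith [mul_nonneg (by nlinarith : (0:ℝ) ≤ 1 - c^2) hP.le]
  have h2 : (1+c^2)*P*C0 = c^2*(P^2 - c^2*E) := by
    rw [hC0]; field_simp
  have hprod : (P - C0)*(c^2*P - C0) = c^4*E + C0^2 := by linear_combination -h2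
  have hprodB : (P - C0)*(c^2*P - C0)*B = (c^4*E + C0^2)*B := by rw [hprod]
  nlinarith [sq_nonneg ((P - C0)*hd + c^2*S),
    mul_le_mul_of_nonneg_left hS (by positivity : (0:ℝ) ≤ c^4),
    mul_nonneg (sq_nonneg C0) hB, hprodB, hM1, hM2]

set_option maxHeartbeats 1000000 in
/-- positive definiteness of the reduced energy-current quadratic form
`Q(ḣ,u̇) = ξ^∥ ḣ² + 2c² (ξ^⊥ ⋅ u̇) ḣ + c² ξ^∥ (u̇_κ u̇^κ)` on variations `u̇` that are
`m`-orthogonal to `u`: if `(h⁻¹)^{κλ} ξ_κ ξ_λ ≤ -C' < 0` and `C ≤ ξ^∥ ≤ 1/C`, then there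
is `c₀ > 0` with `Q(ḣ,u̇) ≥ c₀ (ḣ² + u̇_κ u̇^κ)` for all such variations. -/
theorem energy_current_quadratic_form_positive_definite
    (u ξ : Fin 4 → ℝ) (c C C' : ℝ) (hc : 0 < c) (hc1 : c ≤ 1)
    (hC : 0 < C) (hC' : 0 < C')
    (hu0 : 0 < u 0) (hnorm : ∑ κ : Fin 4, mink4 κ * u κ * u κ = -1)
    (hξ0 : 0 < ξ 0) :
    let n : ℝ := c ^ 2 + (1 - c ^ 2) * (u 0) ^ 2
    let hinv : Fin 4 → Fin 4 → ℝ := fun α β =>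
      n⁻¹ * (c ^ 2 * (if α = β then mink4 α else 0) + (c ^ 2 - 1) * u α * u β)
    let ξpar : ℝ := ∑ κ : Fin 4, ξ κ * u κ
    let ξperp : Fin 4 → ℝ := fun α => ξ α + ξpar * (mink4 α * u α)
    (∑ κ : Fin 4, ∑ l : Fin 4, hinv κ l * ξ κ * ξ l) ≤ -C' →
      C ≤ ξpar → ξpar ≤ 1 / C →
      ∃ c₀ : ℝ, 0 < c₀ ∧ ∀ (hdot : ℝ) (udot : Fin 4 → ℝ),
        (∑ κ : Fin 4, mink4 κ * u κ * udot κ) = 0 →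
        c₀ * (hdot ^ 2 + ∑ κ : Fin 4, mink4 κ * udot κ * udot κ)
          ≤ ξpar * hdot ^ 2
            + 2 * c ^ 2 * (∑ κ : Fin 4, ξperp κ * udot κ) * hdot
            + c ^ 2 * ξpar * (∑ κ : Fin 4, mink4 κ * udot κ * udot κ) := by
  intro n hinv ξpar ξperp hH hCl hCu
  have hinvd : ∀ α β, hinv α β
      = n⁻¹ * (c ^ 2 * (if α = β then mink4 α else 0) + (c ^ 2 - 1) * u α * u β) :=
    fun _ _ => rfl
  have hperp : ∀ α, ξperp α = ξ α + ξpar * (mink4 α * u α) := fun _ => rfl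
  have hnd : n = c ^ 2 + (1 - c ^ 2) * (u 0) ^ 2 := rfl
  have hpar : ξpar = ∑ κ : Fin 4, ξ κ * u κ := rfl
  clear_value n hinv ξpar ξperp
  simp only [Fin.sum_univ_four] at hpar
  simp [Fin.sum_univ_four, mink4] at hnorm
  -- hnorm : -(u 0 * u 0) + u 1 * u 1 + u 2 * u 2 + u 3 * u 3 = -1
  have hn : (u 0)^2 = 1 + (u 1)^2 + (u 2)^2 + (u 3)^2 := by linear_combination -hnorm
  have hnpos : 0 < n := by
    rw [hnd]
    nlinarith [mul_nonneg (by nlinarith : (0:ℝ) ≤ 1 - c^2) (sq_nonneg (u 0)), pow_pos hc 2]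
  have hne : n ≠ 0 := ne_of_gt hnpos
  have hninv : n * n⁻¹ = 1 := mul_inv_cancel₀ hne
  have hppos : 0 < ξpar := lt_of_lt_of_le hC hCl
  have hperp0 : ξperp 0 = ξ 0 - ξpar * u 0 := by rw [hperp]; simp [mink4]; ring
  have hperp1 : ξperp 1 = ξ 1 + ξpar * u 1 := by rw [hperp]; simp [mink4]
  have hperp2 : ξperp 2 = ξ 2 + ξpar * u 2 := by rw [hperp]; simp [mink4]
  have hperp3 : ξperp 3 = ξ 3 + ξpar * u 3 := by rw [hperp]; simp [mink4]
  set E : ℝ := -(ξperp 0)^2 + (ξperp 1)^2 + (ξperp 2)^2 + (ξperp 3)^2 with hE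
  have hvo : u 0 * (-(ξperp 0)) = u 1 * ξperp 1 + u 2 * ξperp 2 + u 3 * ξperp 3 := by
    rw [hperp0, hperp1, hperp2, hperp3]
    linear_combination hpar - ξpar * hnorm
  have hE0 : 0 ≤ E := by
    have h := ortho_nonneg (u 0) (u 1) (u 2) (u 3) (-(ξperp 0)) (ξperp 1) (ξperp 2) (ξperp 3)
      hn hvo
    rw [hE]; nlinarith [h]
  -- the hinv-contraction identity
  have hsum : n * (∑ κ : Fin 4, ∑ l : Fin 4, hinv κ l * ξ κ * ξ l) = c^2*E - ξpar^2 := by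
    rw [hE, hperp0, hperp1, hperp2, hperp3]
    simp [Fin.sum_univ_four, hinvd, mink4]
    linear_combination
      (c^2*(-(ξ 0)^2 + (ξ 1)^2 + (ξ 2)^2 + (ξ 3)^2)
        + (c^2-1)*(ξ 0 * u 0 + ξ 1 * u 1 + ξ 2 * u 2 + ξ 3 * u 3)^2) * hninv
      - (c^2 * ξpar^2) * hnorm
      - ((c^2-1)*(ξ 0 * u 0 + ξ 1 * u 1 + ξ 2 * u 2 + ξ 3 * u 3) - (c^2+1)*ξpar) * hpar
  have hDpos : 0 < ξpar^2 - c^2*E := by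
    have hmul := mul_le_mul_of_nonneg_left hH hnpos.le
    rw [hsum] at hmul
    nlinarith [mul_pos hC' hnpos]
  refine ⟨c^2*(ξpar^2 - c^2*E)/((1+c^2)*ξpar), ?_, ?_⟩
  · apply div_pos (mul_pos (pow_pos hc 2) hDpos)
    positivity
  · intro hdot udot hudot
    simp [Fin.sum_univ_four, mink4] at hudot
    have hw : u 0 * udot 0 = u 1 * udot 1 + u 2 * udot 2 + u 3 * udot 3 := by
      linarith [hudot]
    have hB0 : 0 ≤ -(udot 0)^2 + (udot 1)^2 + (udot 2)^2 + (udot 3)^2 :=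
      ortho_nonneg (u 0) (u 1) (u 2) (u 3) (udot 0) (udot 1) (udot 2) (udot 3) hn hw
    have hcs := ortho_cs (u 0) (u 1) (u 2) (u 3) (-(ξperp 0)) (ξperp 1) (ξperp 2) (ξperp 3)
      (udot 0) (udot 1) (udot 2) (udot 3) hn hvo hw
    have hS : (ξperp 0 * udot 0 + ξperp 1 * udot 1 + ξperp 2 * udot 2 + ξperp 3 * udot 3)^2
        ≤ E * (-(udot 0)^2 + (udot 1)^2 + (udot 2)^2 + (udot 3)^2) := by
      rw [hE]; nlinarith [hcs]
    have K := key_quad c ξpar E (-(udot 0)^2 + (udot 1)^2 + (udot 2)^2 + (udot 3)^2)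
      (ξperp 0 * udot 0 + ξperp 1 * udot 1 + ξperp 2 * udot 2 + ξperp 3 * udot 3) hdot
      (c^2*(ξpar^2 - c^2*E)/((1+c^2)*ξpar)) hc hc1 hppos hE0 hB0 hS hDpos rfl
    simp [Fin.sum_univ_four, mink4]
    linarith [K]
end
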